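/- arXiv:2303.14556 — 2 statements merged into one kernel-verified Lean document; each statement's English description precedes it below -/
import Mathlib

section
/- Let v be a weight on ℝ and {α_I}_{I∈D} a sequence of nonnegative real numbers. Then {α_I}_{I∈D} is a v-Carleson sequence with intensity B if and only if for every nonnegative measurable function F on ℝ, Σ_{I∈D} (inf_{x∈I} F(x)) α_I ≤ B ∫_ℝ F(x) v(x) dx. -/
open MeasureTheory

noncomputable section

/-- A dyadic interval `[2^{-j} k, 2^{-j}(k+1))`, encoded by its scale `j` and position `k`. -/
structure DyadicInterval where
  j : ℤ
  k : ℤ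

namespace DyadicInterval

instance : Countable DyadicInterval :=
  Countable.of_equiv (ℤ × ℤ)
    ⟨fun p => ⟨p.1, p.2⟩, fun I => (I.j, I.k), fun _ => rfl, fun _ => rfl⟩

/-- The underlying set of a dyadic interval. -/
def toSet (I : DyadicInterval) : Set ℝ :=
  Set.Ico ((2 : ℝ) ^ (-I.j) * (I.k : ℝ)) ((2 : ℝ) ^ (-I.j) * ((I.k : ℝ) + 1))

/-- The length `|I| = 2^{-j}`. -/
def len (I : DyadicInterval) : ℝ := (2 : ℝ) ^ (-I.j)

/-- The left half `I₋` of a dyadic interval. -/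
def left (I : DyadicInterval) : DyadicInterval := ⟨I.j + 1, 2 * I.k⟩

/-- The right half `I₊` of a dyadic interval. -/
def right (I : DyadicInterval) : DyadicInterval := ⟨I.j + 1, 2 * I.k + 1⟩

/-- The integral average `⟨f⟩_I = (1/|I|) ∫_I f`. -/
def avg (I : DyadicInterval) (f : ℝ → ℝ) : ℝ := I.len⁻¹ * ∫ x in I.toSet, f x

/-- `Δ_I f := ⟨f⟩_{I₊} - ⟨f⟩_{I₋}`. -/
def delta (I : DyadicInterval) (f : ℝ → ℝ) : ℝ := avg I.right f - avg I.left f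

/-- The Haar function `h_I = |I|^{-1/2} (1_{I₊} - 1_{I₋})`. -/
def haar (I : DyadicInterval) (x : ℝ) : ℝ :=
  (Real.sqrt I.len)⁻¹ *
    (I.right.toSet.indicator (fun _ => (1 : ℝ)) x - I.left.toSet.indicator (fun _ => (1 : ℝ)) x)

end DyadicInterval

open DyadicInterval

/-- The (unweighted) pairing `⟨f, g⟩ = ∫_ℝ f g`. -/
def ip (f g : ℝ → ℝ) : ℝ := ∫ x, f x * g x

/-- A weight: a.e. positive and locally integrable function on `ℝ`. -/
def IsWeight (w : ℝ → ℝ) : Prop :=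
  (∀ᵐ x ∂(volume : Measure ℝ), 0 < w x) ∧ LocallyIntegrable w

/-- A choice of signs `σ = {σ_I}_{I ∈ D}`, `σ_I = ±1`. -/
def IsSigns (σ : DyadicInterval → ℝ) : Prop := ∀ I, σ I = 1 ∨ σ I = -1

/-- The `t`-Haar multiplier `T^t_{w,σ} f = Σ_I σ_I (w/⟨w⟩_I)^t ⟨f,h_I⟩ h_I`. -/
def tHaar (w : ℝ → ℝ) (t : ℝ) (σ : DyadicInterval → ℝ) (f : ℝ → ℝ) (x : ℝ) : ℝ :=
  ∑' I : DyadicInterval, σ I * (w x / avg I w) ^ t * ip f (haar I) * haar I x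

/-- The constant Haar multiplier `(T_σ T_{w,t}) f = Σ_I (σ_I/⟨w⟩_I^t) ⟨f,h_I⟩ h_I`. -/
def constHaar (w : ℝ → ℝ) (t : ℝ) (σ : DyadicInterval → ℝ) (f : ℝ → ℝ) (x : ℝ) : ℝ :=
  ∑' I : DyadicInterval, σ I / (avg I w) ^ t * ip f (haar I) * haar I x

/-- The operator `T` maps `L²(u)` into `L²(v)` with norm at most `C`. -/
def BddBy (u v : ℝ → ℝ) (T : (ℝ → ℝ) → ℝ → ℝ) (C : ℝ) : Prop :=
  ∀ f : ℝ → ℝ, Measurable f →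
    (∫⁻ x, ENNReal.ofReal ((T f x) ^ 2 * v x)) ≤
      ENNReal.ofReal (C ^ 2) * ∫⁻ x, ENNReal.ofReal ((f x) ^ 2 * u x)

/-- The weight `v w^{2t}`. -/
def vw2t (v w : ℝ → ℝ) (t : ℝ) : ℝ → ℝ := fun x => v x * w x ^ (2 * t)

/-- The coefficient `λ_I = (|Δ_I (v w^{2t})|/⟨v w^{2t}⟩_I)(|Δ_I u⁻¹|/⟨u⁻¹⟩_I)(|I|/⟨w⟩_I^t)`. -/
def posOpCoef (u v w : ℝ → ℝ) (t : ℝ) (I : DyadicInterval) : ℝ :=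
  (|delta I (vw2t v w t)| / avg I (vw2t v w t)) * (|delta I (u⁻¹)| / avg I (u⁻¹)) *
    (I.len / (avg I w) ^ t)

/-- The positive operator `P^t_{w,λ} f = Σ_I (w^t/|I|) λ_I ⟨f⟩_I 1_I`. -/
def posOp (u v w : ℝ → ℝ) (t : ℝ) (f : ℝ → ℝ) (x : ℝ) : ℝ :=
  ∑' I : DyadicInterval, (w x ^ t / I.len) * posOpCoef u v w t I * avg I f *
    I.toSet.indicator (fun _ => (1 : ℝ)) x

/-- Condition (i): `⟨u⁻¹⟩_I ⟨v w^{2t}⟩_I / ⟨w⟩_I^{2t} ≤ C` for all dyadic `I`. -/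
def Cond1 (u v w : ℝ → ℝ) (t C : ℝ) : Prop :=
  ∀ I : DyadicInterval, avg I (u⁻¹) * avg I (vw2t v w t) / (avg I w) ^ (2 * t) ≤ C

/-- Condition (ii): the Carleson condition
`(1/|I|) Σ_{J ⊆ I} |J| |Δ_J u⁻¹|² ⟨v w^{2t}⟩_J / ⟨w⟩_J^{2t} ≤ C ⟨u⁻¹⟩_I`,
phrased via finite partial sums. -/
def Cond2 (u v w : ℝ → ℝ) (t C : ℝ) : Prop :=
  ∀ I : DyadicInterval, ∀ F : Finset DyadicInterval, (∀ J ∈ F, J.toSet ⊆ I.toSet) →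
    I.len⁻¹ * ∑ J ∈ F, J.len * (delta J (u⁻¹)) ^ 2 * avg J (vw2t v w t) / (avg J w) ^ (2 * t)
      ≤ C * avg I (u⁻¹)

/-- Condition (iii): the dual Carleson condition
`(1/|I|) Σ_{J ⊆ I} |J| |Δ_J (v w^{2t})|² ⟨u⁻¹⟩_J / ⟨w⟩_J^{2t} ≤ C ⟨v w^{2t}⟩_I`. -/
def Cond3 (u v w : ℝ → ℝ) (t C : ℝ) : Prop :=
  ∀ I : DyadicInterval, ∀ F : Finset DyadicInterval, (∀ J ∈ F, J.toSet ⊆ I.toSet) →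
    I.len⁻¹ * ∑ J ∈ F, J.len * (delta J (vw2t v w t)) ^ 2 * avg J (u⁻¹) / (avg J w) ^ (2 * t)
      ≤ C * avg I (vw2t v w t)

/-- Uniform (in the signs `σ`) boundedness of the `t`-Haar multipliers from `L²(u)` to `L²(v)`. -/
def UnifBdd (u v w : ℝ → ℝ) (t C : ℝ) : Prop :=
  ∀ σ : DyadicInterval → ℝ, IsSigns σ → BddBy u v (tHaar w t σ) C

/-- `{α_I}` is a `v`-Carleson sequence with intensity `B`:
`Σ_{J ⊆ I} α_J ≤ B v(I)` for all dyadic `I`, via finite partial sums. -/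
def CarlesonSeq (v : ℝ → ℝ) (α : DyadicInterval → ℝ) (B : ℝ) : Prop :=
  ∀ I : DyadicInterval, ∀ F : Finset DyadicInterval, (∀ J ∈ F, J.toSet ⊆ I.toSet) →
    ∑ J ∈ F, α J ≤ B * ∫ x in I.toSet, v x

/-- Dyadic reverse Hölder class `RH_p^d`: `sup_I ⟨w⟩_I^{-1} ⟨w^p⟩_I^{1/p} < ∞`. -/
def MemRHp (w : ℝ → ℝ) (p : ℝ) : Prop :=
  ∃ C : ℝ, ∀ I : DyadicInterval, (avg I (fun x => w x ^ p)) ^ (1 / p) ≤ C * avg I w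

/-- Dyadic Muckenhoupt class `A_p^d`: `sup_I ⟨w⟩_I ⟨w^{-1/(p-1)}⟩_I^{p-1} < ∞`. -/
def MemApd (w : ℝ → ℝ) (p : ℝ) : Prop :=
  ∃ C : ℝ, ∀ I : DyadicInterval,
    avg I w * (avg I (fun x => w x ^ (-1 / (p - 1)))) ^ (p - 1) ≤ C

/-- `RH_1^d` condition with constant `B`: `⟨(v/⟨v⟩_I) log(v/⟨v⟩_I)⟩_I ≤ B` for all dyadic `I`. -/
def RH1Const (v : ℝ → ℝ) (B : ℝ) : Prop :=
  ∀ I : DyadicInterval,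
    avg I (fun x => (v x / avg I v) * Real.log (v x / avg I v)) ≤ B

/-- Dyadic class `RH_1^d`. -/
def MemRH1 (v : ℝ → ℝ) : Prop := ∃ B : ℝ, RH1Const v B

/-- The weighted average `⟨g⟩_I^u = (1/u(I)) ∫_I g u`. -/
def wavg (u : ℝ → ℝ) (I : DyadicInterval) (g : ℝ → ℝ) : ℝ :=
  (∫ x in I.toSet, g x * u x) / ∫ x in I.toSet, u x

/-- The weighted Haar function
`h_I^v = v(I)^{-1/2} ( √(v(I₋)/v(I₊)) 1_{I₊} - √(v(I₊)/v(I₋)) 1_{I₋} )`. -/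
def whaar (v : ℝ → ℝ) (I : DyadicInterval) (x : ℝ) : ℝ :=
  (Real.sqrt (∫ y in I.toSet, v y))⁻¹ *
    (Real.sqrt ((∫ y in I.left.toSet, v y) / ∫ y in I.right.toSet, v y) *
        I.right.toSet.indicator (fun _ => (1 : ℝ)) x -
      Real.sqrt ((∫ y in I.right.toSet, v y) / ∫ y in I.left.toSet, v y) *
        I.left.toSet.indicator (fun _ => (1 : ℝ)) x)


namespace WCL

open DyadicInterval

lemma two_zpow_pos (j : ℤ) : (0:ℝ) < 2 ^ j := zpow_pos (by norm_num) _

lemma mem_toSet_iff (I : DyadicInterval) {y : ℝ} :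
    y ∈ I.toSet ↔ (I.k : ℝ) ≤ 2 ^ I.j * y ∧ 2 ^ I.j * y < (I.k : ℝ) + 1 := by
  have h2 : (0:ℝ) < 2 ^ I.j := two_zpow_pos I.j
  simp only [DyadicInterval.toSet, Set.mem_Ico, zpow_neg]
  rw [inv_mul_le_iff₀ h2, lt_inv_mul_iff₀ h2]

lemma nonempty_toSet (I : DyadicInterval) : I.toSet.Nonempty := by
  refine ⟨(2:ℝ) ^ (-I.j) * I.k, ?_, ?_⟩
  · exact le_refl _
  · have h2 : (0:ℝ) < 2 ^ (-I.j) := two_zpow_pos _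
    nlinarith

lemma nest {I J : DyadicInterval} (hj : J.j ≤ I.j)
    (h : (I.toSet ∩ J.toSet).Nonempty) : I.toSet ⊆ J.toSet := by
  obtain ⟨x, hxI, hxJ⟩ := h
  rw [mem_toSet_iff] at hxI hxJ
  set d : ℕ := (I.j - J.j).toNat with hd
  have hij : I.j = J.j + d := by
    have := Int.toNat_of_nonneg (sub_nonneg.mpr hj)
    omega
  have hn2 : ((2:ℝ) ^ I.j) = 2 ^ J.j * ((2:ℝ) ^ d) := by
    rw [hij, zpow_add₀ (by norm_num : (2:ℝ) ≠ 0), zpow_natCast]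
  have hnpos : (0:ℝ) < (2:ℝ) ^ d := by positivity
  have hcast : ((2:ℤ) ^ d : ℝ) = (2:ℝ) ^ d := by push_cast; ring
  have h1 : J.k * 2 ^ d ≤ I.k := by
    have hr : (J.k : ℝ) * 2 ^ d ≤ 2 ^ I.j * x := by
      rw [hn2]
      calc (J.k : ℝ) * 2 ^ d ≤ (2 ^ J.j * x) * 2 ^ d :=
            mul_le_mul_of_nonneg_right hxJ.1 hnpos.le
        _ = 2 ^ J.j * 2 ^ d * x := by ring
    have hr2 : ((J.k * 2 ^ d : ℤ) : ℝ) < ((I.k : ℤ) : ℝ) + 1 := by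
      push_cast
      linarith [hxI.2]
    have : (J.k * 2 ^ d : ℤ) < I.k + 1 := by exact_mod_cast hr2
    omega
  have h2 : I.k + 1 ≤ (J.k + 1) * 2 ^ d := by
    have hr : 2 ^ I.j * x < ((J.k : ℝ) + 1) * 2 ^ d := by
      rw [hn2]
      calc 2 ^ J.j * ((2:ℝ) ^ d) * x = (2 ^ J.j * x) * 2 ^ d := by ring
        _ < ((J.k : ℝ) + 1) * 2 ^ d := by
            exact mul_lt_mul_of_pos_right hxJ.2 hnpos
    have hr2 : ((I.k : ℤ) : ℝ) < (((J.k + 1) * 2 ^ d : ℤ) : ℝ) := by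
      push_cast
      linarith [hxI.1]
    have : (I.k : ℤ) < (J.k + 1) * 2 ^ d := by exact_mod_cast hr2
    omega
  intro y hy
  rw [mem_toSet_iff] at hy ⊢
  constructor
  · have : (J.k : ℝ) * 2 ^ d ≤ (2 ^ J.j * y) * 2 ^ d := by
      have c1 : ((J.k * 2 ^ d : ℤ) : ℝ) ≤ (I.k : ℝ) := by exact_mod_cast h1
      push_cast at c1
      calc (J.k : ℝ) * 2 ^ d ≤ (I.k : ℝ) := c1
        _ ≤ 2 ^ I.j * y := hy.1
        _ = (2 ^ J.j * y) * 2 ^ d := by rw [hn2]; ring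
    exact le_of_mul_le_mul_right this hnpos
  · have : (2 ^ J.j * y) * 2 ^ d < ((J.k : ℝ) + 1) * 2 ^ d := by
      have c2 : ((I.k : ℝ) + 1) ≤ ((J.k : ℝ) + 1) * 2 ^ d := by
        have := h2
        have : (((I.k + 1 : ℤ)) : ℝ) ≤ (((J.k + 1) * 2 ^ d : ℤ) : ℝ) := by exact_mod_cast this
        push_cast at this
        linarith
      calc (2 ^ J.j * y) * 2 ^ d = 2 ^ I.j * y := by rw [hn2]; ring
        _ < (I.k : ℝ) + 1 := hy.2
        _ ≤ ((J.k : ℝ) + 1) * 2 ^ d := c2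
    exact lt_of_mul_lt_mul_right this hnpos.le

lemma eq_of_same_j {I J : DyadicInterval} (hj : I.j = J.j)
    (h : (I.toSet ∩ J.toSet).Nonempty) : I = J := by
  obtain ⟨x, hxI, hxJ⟩ := h
  rw [mem_toSet_iff] at hxI hxJ
  rw [hj] at hxI
  have hk : I.k = J.k := by
    have h1 : (I.k : ℝ) < (J.k : ℝ) + 1 := lt_of_le_of_lt hxI.1 hxJ.2
    have h2 : (J.k : ℝ) < (I.k : ℝ) + 1 := lt_of_le_of_lt hxJ.1 hxI.2
    have h1' : (I.k : ℤ) < J.k + 1 := by exact_mod_cast h1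
    have h2' : (J.k : ℤ) < I.k + 1 := by exact_mod_cast h2
    omega
  cases I; cases J; simp_all

lemma measurableSet_toSet (I : DyadicInterval) : MeasurableSet I.toSet :=
  measurableSet_Ico

lemma integrableOn_toSet {v : ℝ → ℝ} (hv : IsWeight v) (I : DyadicInterval) :
    IntegrableOn v I.toSet := by
  exact (hv.2.integrableOn_isCompact isCompact_Icc).mono_set Set.Ico_subset_Icc_self

lemma ofReal_setIntegral {v : ℝ → ℝ} (hv : IsWeight v) (I : DyadicInterval) :
    ENNReal.ofReal (∫ x in I.toSet, v x) = ∫⁻ x in I.toSet, ENNReal.ofReal (v x) :=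
  ofReal_integral_eq_lintegral_ofReal (integrableOn_toSet hv I)
    (ae_restrict_of_ae (hv.1.mono fun _ hx => hx.le))

/-- Claim B: disjointification of maximal dyadic intervals plus the Carleson condition. -/
lemma claimB {v : ℝ → ℝ} (hv : IsWeight v) {α : DyadicInterval → ℝ}
    (hα : ∀ I, 0 ≤ α I) {B : ℝ} (hB : 0 ≤ B) (hC : CarlesonSeq v α B)
    {F : ℝ → ℝ} (hFm : Measurable F) (s : ℝ) (H : Finset DyadicInterval)
    (hH : ∀ I ∈ H, ∀ x ∈ I.toSet, s ≤ F x) :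
    ENNReal.ofReal (∑ I ∈ H, α I) ≤
      ENNReal.ofReal B * ∫⁻ x in {x | s ≤ F x}, ENNReal.ofReal (v x) := by
  classical
  have hm : ∀ I ∈ H, ∃ M, M ∈ H ∧ I.toSet ⊆ M.toSet ∧
      ∀ J ∈ H, I.toSet ⊆ J.toSet → M.j ≤ J.j := by
    intro I hI
    obtain ⟨M, hM, hmin⟩ := (H.filter fun J => I.toSet ⊆ J.toSet).exists_min_image
      DyadicInterval.j ⟨I, by simp [hI]⟩
    simp only [Finset.mem_filter] at hM hmin
    exact ⟨M, hM.1, hM.2, fun J hJ hIJ => hmin J ⟨hJ, hIJ⟩⟩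
  choose! m hmH hmsub hmmin using hm
  set K := H.image m with hK
  have hsum : ∑ I ∈ H, α I = ∑ M ∈ K, ∑ I ∈ H.filter (fun I => m I = M), α I :=
    (Finset.sum_fiberwise_of_maps_to (fun I hI => Finset.mem_image_of_mem m hI) α).symm
  have hKH : ∀ M ∈ K, M ∈ H := by
    intro M hM
    obtain ⟨I, hI, rfl⟩ := Finset.mem_image.mp hM
    exact hmH I hI
  have hinner : ∀ M ∈ K, ∑ I ∈ H.filter (fun I => m I = M), α I ≤ B * ∫ x in M.toSet, v x := by
    intro M hM
    refine hC M _ ?_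
    intro J hJ
    obtain ⟨hJH, hJm⟩ := Finset.mem_filter.mp hJ
    exact hJm ▸ hmsub J hJH
  have h1 : (∑ I ∈ H, α I) ≤ ∑ M ∈ K, B * ∫ x in M.toSet, v x :=
    hsum ▸ Finset.sum_le_sum hinner
  have hint_nonneg : ∀ M : DyadicInterval, 0 ≤ ∫ x in M.toSet, v x := fun M =>
    integral_nonneg_of_ae (ae_restrict_of_ae (hv.1.mono fun _ hx => hx.le))
  calc ENNReal.ofReal (∑ I ∈ H, α I)
      ≤ ENNReal.ofReal (∑ M ∈ K, B * ∫ x in M.toSet, v x) := ENNReal.ofReal_le_ofReal h1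
    _ = ENNReal.ofReal B * ∑ M ∈ K, ENNReal.ofReal (∫ x in M.toSet, v x) := by
        rw [← Finset.mul_sum, ENNReal.ofReal_mul hB,
          ENNReal.ofReal_sum_of_nonneg (fun M _ => hint_nonneg M)]
    _ = ENNReal.ofReal B * ∑ M ∈ K, ∫⁻ x in M.toSet, ENNReal.ofReal (v x) := by
        congr 1
        exact Finset.sum_congr rfl fun M _ => ofReal_setIntegral hv M
    _ ≤ ENNReal.ofReal B * ∫⁻ x in {x | s ≤ F x}, ENNReal.ofReal (v x) := by
        refine mul_le_mul_right ?_ _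
        have hdisj : (K : Set DyadicInterval).PairwiseDisjoint DyadicInterval.toSet := by
          have key : ∀ M₁ ∈ K, ∀ M₂ ∈ K, M₂.j ≤ M₁.j →
              (M₁.toSet ∩ M₂.toSet).Nonempty → M₁ = M₂ := by
            intro M₁ hM₁ M₂ hM₂ hj hne
            obtain ⟨I₁, hI₁, hI₁e⟩ := Finset.mem_image.mp hM₁
            have hsub12 : M₁.toSet ⊆ M₂.toSet := nest hj hne
            have hjle : M₁.j ≤ M₂.j := by
              have hss : I₁.toSet ⊆ M₂.toSet := by
                rw [← hI₁e] at hsub12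
                exact (hmsub I₁ hI₁).trans hsub12
              have := hmmin I₁ hI₁ M₂ (hKH M₂ hM₂) hss
              rwa [hI₁e] at this
            exact eq_of_same_j (le_antisymm hjle hj) hne
          intro M₁ hM₁ M₂ hM₂ hne
          rw [Function.onFun]
          by_contra hnd
          obtain ⟨x, hx⟩ := Set.not_disjoint_iff_nonempty_inter.mp hnd
          rcases le_total M₂.j M₁.j with h | h
          · exact hne (key M₁ hM₁ M₂ hM₂ h ⟨x, hx⟩)
          · exact hne (key M₂ hM₂ M₁ hM₁ h ⟨x, hx.2, hx.1⟩).symm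
        rw [← lintegral_biUnion_finset hdisj (fun M _ => measurableSet_toSet M)]
        refine lintegral_mono_set ?_
        intro x hx
        simp only [Set.mem_iUnion] at hx
        obtain ⟨M, hM, hxM⟩ := hx
        exact hH M (hKH M hM) x hxM

/-- Layer-cutting inequality. -/
lemma layer {v : ℝ → ℝ} (hv : IsWeight v) {F : ℝ → ℝ} (hFm : Measurable F)
    (hF : ∀ x, 0 ≤ F x) {t : ℝ} (ht : 0 ≤ t) :
    ENNReal.ofReal t * (∫⁻ x in {x | t ≤ F x}, ENNReal.ofReal (v x)) +
      ∫⁻ x, ENNReal.ofReal (max (F x - t) 0 * v x) ≤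
    ∫⁻ x, ENNReal.ofReal (F x * v x) := by
  have hE : MeasurableSet {x | t ≤ F x} := measurableSet_le measurable_const hFm
  have hvm : AEMeasurable v := hv.2.aestronglyMeasurable.aemeasurable
  have hg : AEMeasurable (fun x => ({x | t ≤ F x}).indicator
      (fun x => ENNReal.ofReal t * ENNReal.ofReal (v x)) x) :=
    (AEMeasurable.const_mul hvm.ennreal_ofReal _).indicator hE
  have h1 : ENNReal.ofReal t * (∫⁻ x in {x | t ≤ F x}, ENNReal.ofReal (v x)) =
      ∫⁻ x, ({x | t ≤ F x}).indicator
        (fun x => ENNReal.ofReal t * ENNReal.ofReal (v x)) x := by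
    rw [lintegral_indicator hE, lintegral_const_mul' _ _ ENNReal.ofReal_ne_top]
  rw [h1, ← lintegral_add_left' hg]
  refine lintegral_mono_ae ?_
  filter_upwards [hv.1] with x hvx
  by_cases hx : t ≤ F x
  · rw [Set.indicator_of_mem (by exact hx : x ∈ {x | t ≤ F x}),
      max_eq_left (sub_nonneg.mpr hx), ← ENNReal.ofReal_mul ht,
      ← ENNReal.ofReal_add (mul_nonneg ht hvx.le)
        (mul_nonneg (sub_nonneg.mpr hx) hvx.le)]
    exact ENNReal.ofReal_le_ofReal (le_of_eq (by ring))
  · rw [Set.indicator_of_notMem (by exact hx : x ∉ {x | t ≤ F x}),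
      max_eq_right (by push_neg at hx; linarith)]
    simp

/-- Claim C: the layered estimate, by induction on the number of distinct levels. -/
lemma claimC {v : ℝ → ℝ} (hv : IsWeight v) {α : DyadicInterval → ℝ}
    (hα : ∀ I, 0 ≤ α I) {B : ℝ} (hB : 0 ≤ B) (hC : CarlesonSeq v α B) :
    ∀ n : ℕ, ∀ T : Finset ℝ, T.card ≤ n → (∀ s ∈ T, 0 < s) →
    ∀ (G₀ : Finset DyadicInterval) (β : DyadicInterval → ℝ) (F : ℝ → ℝ),
      Measurable F → (∀ x, 0 ≤ F x) →
      (∀ I ∈ G₀, β I ∈ T ∧ ∀ x ∈ I.toSet, β I ≤ F x) →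
      ENNReal.ofReal (∑ I ∈ G₀, β I * α I) ≤
        ENNReal.ofReal B * ∫⁻ x, ENNReal.ofReal (F x * v x) := by
  classical
  intro n
  induction n with
  | zero =>
    intro T hT _ G₀ β F _ _ hmem
    have hTe : T = ∅ := Finset.card_eq_zero.mp (Nat.le_zero.mp hT)
    have hG : G₀ = ∅ := Finset.eq_empty_of_forall_notMem fun I hI => by
      simpa [hTe] using (hmem I hI).1
    simp [hG]
  | succ n ih =>
    intro T hT hTpos G₀ β F hFm hF hmem
    rcases T.eq_empty_or_nonempty with rfl | hne
    · have hG : G₀ = ∅ := Finset.eq_empty_of_forall_notMem fun I hI => by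
        simpa using (hmem I hI).1
      simp [hG]
    · set t := T.min' hne with htdef
      have ht : 0 < t := hTpos _ (T.min'_mem hne)
      have hstep1 : ENNReal.ofReal (∑ I ∈ G₀, α I) ≤
          ENNReal.ofReal B * ∫⁻ x in {x | t ≤ F x}, ENNReal.ofReal (v x) :=
        claimB hv hα hB hC hFm t G₀ (fun I hI x hx =>
          le_trans (T.min'_le _ (hmem I hI).1) ((hmem I hI).2 x hx))
      set G₁ := G₀.filter (fun I => β I ≠ t) with hG₁
      set T' := (T.erase t).image (fun s => s - t) with hT'def
      have hT' : T'.card ≤ n := by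
        have h1 : T'.card ≤ (T.erase t).card := Finset.card_image_le
        have h2 : (T.erase t).card = T.card - 1 := Finset.card_erase_of_mem (T.min'_mem hne)
        have h3 : 1 ≤ T.card := Finset.card_pos.mpr hne
        omega
      have hT'pos : ∀ s ∈ T', 0 < s := by
        intro s hs
        obtain ⟨u, hu, rfl⟩ := Finset.mem_image.mp hs
        obtain ⟨hu1, hu2⟩ := Finset.mem_erase.mp hu
        have : t < u := lt_of_le_of_ne (T.min'_le u hu2) (Ne.symm hu1)
        linarith
      have hIH := ih T' hT' hT'pos G₁ (fun I => β I - t) (fun x => max (F x - t) 0)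
        ((hFm.sub measurable_const).max measurable_const) (fun x => le_max_right _ _) ?_
      · have hkey : ∑ I ∈ G₀, β I * α I =
            t * (∑ I ∈ G₀, α I) + ∑ I ∈ G₁, (β I - t) * α I := by
          have h2 : ∑ I ∈ G₁, (β I - t) * α I = ∑ I ∈ G₀, (β I - t) * α I :=
            Finset.sum_filter_of_ne (fun I _ h0 heq => h0 (by rw [heq]; ring))
          rw [h2, Finset.mul_sum, ← Finset.sum_add_distrib]
          exact Finset.sum_congr rfl fun I _ => by ring
        calc ENNReal.ofReal (∑ I ∈ G₀, β I * α I)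
            = ENNReal.ofReal (t * (∑ I ∈ G₀, α I) + ∑ I ∈ G₁, (β I - t) * α I) := by
              rw [hkey]
          _ ≤ ENNReal.ofReal (t * ∑ I ∈ G₀, α I) +
              ENNReal.ofReal (∑ I ∈ G₁, (β I - t) * α I) := ENNReal.ofReal_add_le
          _ ≤ ENNReal.ofReal B *
                (ENNReal.ofReal t * ∫⁻ x in {x | t ≤ F x}, ENNReal.ofReal (v x)) +
              ENNReal.ofReal B * ∫⁻ x, ENNReal.ofReal (max (F x - t) 0 * v x) := by
              refine add_le_add ?_ hIH
              rw [ENNReal.ofReal_mul ht.le]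
              calc ENNReal.ofReal t * ENNReal.ofReal (∑ I ∈ G₀, α I)
                  ≤ ENNReal.ofReal t *
                    (ENNReal.ofReal B * ∫⁻ x in {x | t ≤ F x}, ENNReal.ofReal (v x)) :=
                    mul_le_mul_right hstep1 _
                _ = ENNReal.ofReal B *
                    (ENNReal.ofReal t * ∫⁻ x in {x | t ≤ F x}, ENNReal.ofReal (v x)) := by
                    ring
          _ = ENNReal.ofReal B *
              (ENNReal.ofReal t * (∫⁻ x in {x | t ≤ F x}, ENNReal.ofReal (v x)) +
                ∫⁻ x, ENNReal.ofReal (max (F x - t) 0 * v x)) := (mul_add _ _ _).symm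
          _ ≤ ENNReal.ofReal B * ∫⁻ x, ENNReal.ofReal (F x * v x) :=
              mul_le_mul_right (layer hv hFm hF ht.le) _
      · intro I hI
        obtain ⟨hIG, hIne⟩ := Finset.mem_filter.mp hI
        refine ⟨Finset.mem_image.mpr ⟨β I, Finset.mem_erase.mpr ⟨hIne, (hmem I hIG).1⟩, rfl⟩, ?_⟩
        intro x hx
        have h0 := (hmem I hIG).2 x hx
        have h' : β I - t ≤ F x - t := by linarith
        exact le_trans h' (le_max_left _ _)

end WCL

set_option maxHeartbeats 1000000 in
/-- **Weighted Carleson Lemma.** A sequence of nonnegative numbers `{α_I}` is a `v`-Carleson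
sequence with intensity `B` iff for every nonnegative measurable `F`,
`Σ_I (inf_{x ∈ I} F) α_I ≤ B ∫ F v` (the sum interpreted via finite partial sums). -/
theorem weighted_carleson_lemma (v : ℝ → ℝ) (hv : IsWeight v)
    (α : DyadicInterval → ℝ) (hα : ∀ I, 0 ≤ α I) (B : ℝ) (hB : 0 ≤ B) :
    CarlesonSeq v α B ↔
      ∀ F : ℝ → ℝ, Measurable F → (∀ x, 0 ≤ F x) →
        ∀ G : Finset DyadicInterval,
          ENNReal.ofReal (∑ I ∈ G, (⨅ x : I.toSet, F x.val) * α I) ≤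
            ENNReal.ofReal B * ∫⁻ x, ENNReal.ofReal (F x * v x) := by
  classical
  constructor
  · intro hC F hFm hF G
    have hβnonneg : ∀ I : DyadicInterval, 0 ≤ ⨅ x : I.toSet, F x.val := by
      intro I
      haveI : Nonempty I.toSet := (WCL.nonempty_toSet I).to_subtype
      exact le_ciInf fun x => hF x.val
    have hβle : ∀ I : DyadicInterval, ∀ x ∈ I.toSet, (⨅ x : I.toSet, F x.val) ≤ F x := by
      intro I x hx
      exact ciInf_le ⟨0, fun y hy => by obtain ⟨z, rfl⟩ := hy; exact hF _⟩ (⟨x, hx⟩ : I.toSet)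
    set G₀ := G.filter (fun I => 0 < (⨅ x : I.toSet, F x.val) * α I) with hG₀
    have hsum : ∑ I ∈ G₀, (⨅ x : I.toSet, F x.val) * α I =
        ∑ I ∈ G, (⨅ x : I.toSet, F x.val) * α I := by
      refine Finset.sum_filter_of_ne ?_
      intro I _ h0
      rcases lt_or_eq_of_le (mul_nonneg (hβnonneg I) (hα I)) with h | h
      · exact h
      · exact absurd h.symm h0
    rw [← hsum]
    refine WCL.claimC hv hα hB hC (G₀.image (fun I => ⨅ x : I.toSet, F x.val)).card
      (G₀.image (fun I => ⨅ x : I.toSet, F x.val)) le_rfl ?_ G₀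
      (fun I => ⨅ x : I.toSet, F x.val) F hFm hF ?_
    · intro s hs
      obtain ⟨I, hI, rfl⟩ := Finset.mem_image.mp hs
      have hpos := (Finset.mem_filter.mp hI).2
      nlinarith [hα I, hβnonneg I]
    · intro I hI
      exact ⟨Finset.mem_image_of_mem _ hI, hβle I⟩
  · intro h I Fs hFs
    have hFmeas : Measurable (I.toSet.indicator (fun _ => (1:ℝ))) :=
      measurable_const.indicator (WCL.measurableSet_toSet I)
    have key := h _ hFmeas (fun x => Set.indicator_nonneg (fun _ _ => zero_le_one) x) Fs
    have hinf : ∀ J ∈ Fs,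
        (⨅ x : J.toSet, I.toSet.indicator (fun _ => (1:ℝ)) x.val) = 1 := by
      intro J hJ
      haveI : Nonempty J.toSet := (WCL.nonempty_toSet J).to_subtype
      have heq : ∀ x : J.toSet, I.toSet.indicator (fun _ => (1:ℝ)) x.val = 1 := fun x =>
        Set.indicator_of_mem (hFs J hJ x.2) _
      rw [iInf_congr heq]
      exact ciInf_const
    have hL : ∑ J ∈ Fs, (⨅ x : J.toSet, I.toSet.indicator (fun _ => (1:ℝ)) x.val) * α J =
        ∑ J ∈ Fs, α J :=
      Finset.sum_congr rfl fun J hJ => by rw [hinf J hJ, one_mul]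
    rw [hL] at key
    have hR : (∫⁻ x, ENNReal.ofReal (I.toSet.indicator (fun _ => (1:ℝ)) x * v x)) =
        ∫⁻ x in I.toSet, ENNReal.ofReal (v x) := by
      rw [← lintegral_indicator (WCL.measurableSet_toSet I)]
      refine lintegral_congr fun x => ?_
      by_cases hx : x ∈ I.toSet
      · simp [hx]
      · simp [hx]
    rw [hR, ← WCL.ofReal_setIntegral hv I, ← ENNReal.ofReal_mul hB] at key
    have hRnn : 0 ≤ B * ∫ x in I.toSet, v x :=
      mul_nonneg hB (integral_nonneg_of_ae (ae_restrict_of_ae (hv.1.mono fun _ hx => hx.le)))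
    exact (ENNReal.ofReal_le_ofReal_iff hRnn).mp key
end
end

section
/- Let t ∈ ℝ, let u, v, w be weights on ℝ (with u^{-1} locally integrable), and let σ be a fixed choice of signs. If T^t_{w,σ} is bounded from L²(u) to L²(v) with norm C, then for every dyadic interval I ∈ D, ⟨w^{2t} v⟩_I / (⟨u⟩_I ⟨w⟩_I^{2t}) ≤ C². -/
open MeasureTheory

noncomputable section

open DyadicInterval

/-! ### Auxiliary lemmas -/

namespace DyadicInterval

lemma len_pos (I : DyadicInterval) : 0 < I.len := zpow_pos (by norm_num) _

lemma measurableSet_toSet (I : DyadicInterval) : MeasurableSet I.toSet :=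
  measurableSet_Ico

lemma zpow_neg_succ (j : ℤ) : (2 : ℝ) ^ (-(j + 1)) = (2 : ℝ) ^ (-j) / 2 := by
  rw [neg_add, zpow_add₀ (by norm_num : (2:ℝ) ≠ 0)]
  norm_num
  ring

lemma toSet_def (I : DyadicInterval) :
    I.toSet = Set.Ico (I.len * I.k) (I.len * I.k + I.len) := by
  unfold toSet len
  congr 1
  ring

lemma left_toSet (I : DyadicInterval) :
    I.left.toSet = Set.Ico (I.len * I.k) (I.len * I.k + I.len / 2) := by
  show Set.Ico ((2:ℝ) ^ (-(I.j+1)) * ((2 * I.k : ℤ) : ℝ))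
      ((2:ℝ) ^ (-(I.j+1)) * (((2 * I.k : ℤ) : ℝ) + 1)) = _
  rw [zpow_neg_succ]
  unfold len
  push_cast
  congr 1 <;> ring

lemma right_toSet (I : DyadicInterval) :
    I.right.toSet = Set.Ico (I.len * I.k + I.len / 2) (I.len * I.k + I.len) := by
  show Set.Ico ((2:ℝ) ^ (-(I.j+1)) * ((2 * I.k + 1 : ℤ) : ℝ))
      ((2:ℝ) ^ (-(I.j+1)) * (((2 * I.k + 1 : ℤ) : ℝ) + 1)) = _
  rw [zpow_neg_succ]
  unfold len
  push_cast
  congr 1 <;> ring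

lemma len_left (I : DyadicInterval) : I.left.len = I.len / 2 := zpow_neg_succ I.j

lemma len_right (I : DyadicInterval) : I.right.len = I.len / 2 := zpow_neg_succ I.j

lemma volume_toSet (I : DyadicInterval) : volume I.toSet = ENNReal.ofReal I.len := by
  rw [toSet_def, Real.volume_Ico]
  congr 1
  ring

lemma left_subset (I : DyadicInterval) : I.left.toSet ⊆ I.toSet := by
  rw [left_toSet, toSet_def]
  exact Set.Ico_subset_Ico le_rfl (by linarith [I.len_pos])

lemma right_subset (I : DyadicInterval) : I.right.toSet ⊆ I.toSet := by
  rw [right_toSet, toSet_def]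
  exact Set.Ico_subset_Ico (by linarith [I.len_pos]) le_rfl

lemma disjoint_left_right (I : DyadicInterval) : Disjoint I.left.toSet I.right.toSet := by
  rw [left_toSet, right_toSet]
  exact Set.Ico_disjoint_Ico_same

lemma left_union_right (I : DyadicInterval) : I.left.toSet ∪ I.right.toSet = I.toSet := by
  rw [left_toSet, right_toSet, toSet_def]
  exact Set.Ico_union_Ico_eq_Ico (by linarith [I.len_pos]) (by linarith [I.len_pos])

lemma haar_eq_zero_of_not_mem {I : DyadicInterval} {x : ℝ} (hx : x ∉ I.toSet) :
    haar I x = 0 := by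
  have h1 : x ∉ I.right.toSet := fun h => hx (I.right_subset h)
  have h2 : x ∉ I.left.toSet := fun h => hx (I.left_subset h)
  simp [haar, Set.indicator_of_notMem h1, Set.indicator_of_notMem h2]

lemma haar_of_mem_left {I : DyadicInterval} {x : ℝ} (hx : x ∈ I.left.toSet) :
    haar I x = -(Real.sqrt I.len)⁻¹ := by
  have h1 : x ∉ I.right.toSet := fun h => (I.disjoint_left_right).le_bot ⟨hx, h⟩
  simp [haar, Set.indicator_of_notMem h1, Set.indicator_of_mem hx]

lemma haar_of_mem_right {I : DyadicInterval} {x : ℝ} (hx : x ∈ I.right.toSet) :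
    haar I x = (Real.sqrt I.len)⁻¹ := by
  have h1 : x ∉ I.left.toSet := fun h => (I.disjoint_left_right).le_bot ⟨h, hx⟩
  simp [haar, Set.indicator_of_notMem h1, Set.indicator_of_mem hx]

lemma measurable_haar (I : DyadicInterval) : Measurable (haar I) :=
  measurable_const.mul
    ((measurable_const.indicator I.right.measurableSet_toSet).sub
      (measurable_const.indicator I.left.measurableSet_toSet))

lemma integrable_indicator_one (I : DyadicInterval) :
    Integrable (I.toSet.indicator fun _ => (1 : ℝ)) :=
  (integrable_indicator_iff I.measurableSet_toSet).2
    (integrableOn_const (by rw [volume_toSet]; exact ENNReal.ofReal_ne_top))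

lemma integral_indicator_one (I : DyadicInterval) :
    ∫ x, I.toSet.indicator (fun _ => (1 : ℝ)) x = I.len := by
  rw [MeasureTheory.integral_indicator_const (1 : ℝ) I.measurableSet_toSet,
    measureReal_def, volume_toSet, smul_eq_mul, mul_one, ENNReal.toReal_ofReal I.len_pos.le]

lemma integral_haar (I : DyadicInterval) : ∫ x, haar I x = 0 := by
  unfold haar
  rw [integral_const_mul,
    integral_sub I.right.integrable_indicator_one I.left.integrable_indicator_one,
    integral_indicator_one, integral_indicator_one, len_left, len_right]
  ring

lemma sq_haar (I : DyadicInterval) (x : ℝ) :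
    (haar I x) ^ 2 = I.len⁻¹ * I.toSet.indicator (fun _ => (1 : ℝ)) x := by
  have hsq : ((Real.sqrt I.len)⁻¹) ^ 2 = I.len⁻¹ := by
    rw [inv_pow, Real.sq_sqrt I.len_pos.le]
  by_cases hL : x ∈ I.left.toSet
  · rw [haar_of_mem_left hL, Set.indicator_of_mem (I.left_subset hL), neg_pow, hsq]
    norm_num
  · by_cases hR : x ∈ I.right.toSet
    · rw [haar_of_mem_right hR, Set.indicator_of_mem (I.right_subset hR), hsq]
      norm_num
    · have hx : x ∉ I.toSet := by
        rw [← left_union_right]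
        simp [hL, hR]
      rw [haar_eq_zero_of_not_mem hx, Set.indicator_of_notMem hx]
      norm_num

lemma toSet_scaled (I : DyadicInterval) {d : ℤ} (hd : I.j ≤ d) :
    I.toSet = Set.Ico ((2:ℝ) ^ (-d) * ((2 ^ (d - I.j).toNat * I.k : ℤ) : ℝ))
      ((2:ℝ) ^ (-d) * ((2 ^ (d - I.j).toNat * (I.k + 1) : ℤ) : ℝ)) := by
  have h2 : (2:ℝ) ^ (-d) * (2:ℝ) ^ ((d - I.j).toNat) = (2:ℝ) ^ (-I.j) := by
    rw [← zpow_natCast (2:ℝ), ← zpow_add₀ (by norm_num : (2:ℝ) ≠ 0)]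
    congr 1
    omega
  unfold toSet
  push_cast
  simp only [← mul_assoc, h2]

lemma subset_or_disjoint_of_lt {I J : DyadicInterval} (hj : I.j < J.j) :
    Disjoint I.toSet J.toSet ∨ J.toSet ⊆ I.left.toSet ∨ J.toSet ⊆ I.right.toSet := by
  set e : ℝ := (2:ℝ) ^ (-J.j) with he
  have hepos : (0:ℝ) < e := zpow_pos (by norm_num) _
  set n : ℕ := (J.j - I.j - 1).toNat with hn
  have hIset : I.toSet = Set.Ico (e * ((2 ^ (n+1) * I.k : ℤ) : ℝ))
      (e * ((2 ^ (n+1) * (I.k + 1) : ℤ) : ℝ)) := by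
    have h := toSet_scaled I hj.le
    rwa [show (J.j - I.j).toNat = n + 1 by omega] at h
  have hLset : I.left.toSet = Set.Ico (e * ((2 ^ (n+1) * I.k : ℤ) : ℝ))
      (e * ((2 ^ n * (2 * I.k + 1) : ℤ) : ℝ)) := by
    have h := toSet_scaled I.left (show I.left.j ≤ J.j by show I.j + 1 ≤ J.j; omega)
    rw [show (J.j - I.left.j).toNat = n by show (J.j - (I.j+1)).toNat = n; omega] at h
    rw [h]
    show Set.Ico (e * ((2 ^ n * (2 * I.k) : ℤ) : ℝ)) (e * ((2 ^ n * (2 * I.k + 1) : ℤ) : ℝ)) = _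
    congr 2
    push_cast
    ring
  have hRset : I.right.toSet = Set.Ico (e * ((2 ^ n * (2 * I.k + 1) : ℤ) : ℝ))
      (e * ((2 ^ (n+1) * (I.k + 1) : ℤ) : ℝ)) := by
    have h := toSet_scaled I.right (show I.right.j ≤ J.j by show I.j + 1 ≤ J.j; omega)
    rw [show (J.j - I.right.j).toNat = n by show (J.j - (I.j+1)).toNat = n; omega] at h
    rw [h]
    show Set.Ico (e * ((2 ^ n * (2 * I.k + 1) : ℤ) : ℝ))
      (e * ((2 ^ n * (2 * I.k + 1 + 1) : ℤ) : ℝ)) = _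
    congr 2
    push_cast
    ring
  have hJset : J.toSet = Set.Ico (e * ((J.k : ℤ) : ℝ)) (e * (((J.k + 1 : ℤ)) : ℝ)) := by
    unfold toSet
    push_cast
    rfl
  have key : ∀ p q : ℤ, p ≤ q → e * (p : ℝ) ≤ e * (q : ℝ) := fun p q h =>
    mul_le_mul_of_nonneg_left (by exact_mod_cast h) hepos.le
  rcases lt_or_ge J.k (2 ^ (n+1) * I.k) with h1 | h1
  · left
    rw [hIset, hJset, Set.disjoint_left]
    intro x hx1 hx2
    have hle := key (J.k + 1) (2 ^ (n+1) * I.k) (by omega)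
    exact absurd (lt_of_lt_of_le hx2.2 (le_trans hle hx1.1)) (lt_irrefl x)
  · rcases lt_or_ge J.k (2 ^ n * (2 * I.k + 1)) with h2 | h2
    · right; left
      rw [hLset, hJset]
      exact Set.Ico_subset_Ico (key _ _ h1) (key _ _ (by omega))
    · rcases lt_or_ge J.k (2 ^ (n+1) * (I.k + 1)) with h3 | h3
      · right; right
        rw [hRset, hJset]
        exact Set.Ico_subset_Ico (key _ _ h2) (key _ _ (by omega))
      · left
        rw [hIset, hJset, Set.disjoint_left]
        intro x hx1 hx2
        have hle := key (2 ^ (n+1) * (I.k + 1)) J.k h3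
        exact absurd (lt_of_lt_of_le hx1.2 (le_trans hle hx2.1)) (lt_irrefl x)

lemma disjoint_of_eq_scale {I J : DyadicInterval} (hj : I.j = J.j) (hk : I.k ≠ J.k) :
    Disjoint I.toSet J.toSet := by
  have main : ∀ (A B : DyadicInterval), A.j = B.j → A.k < B.k →
      Disjoint A.toSet B.toSet := by
    intro A B hAB hkk
    rw [Set.disjoint_left]
    intro x hx1 hx2
    unfold toSet at hx1 hx2
    have hpow : (0:ℝ) < (2:ℝ) ^ (-A.j) := zpow_pos (by norm_num) _
    have hq : ((A.k : ℝ) + 1) ≤ (B.k : ℝ) := by exact_mod_cast hkk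
    have h1 : (2:ℝ) ^ (-A.j) * ((A.k : ℝ) + 1) ≤ (2:ℝ) ^ (-A.j) * (B.k : ℝ) :=
      mul_le_mul_of_nonneg_left hq hpow.le
    rw [← hAB] at hx2
    exact absurd (lt_of_lt_of_le hx1.2 (le_trans h1 hx2.1)) (lt_irrefl x)
  rcases hk.lt_or_gt with h | h
  · exact main I J hj h
  · exact (main J I hj.symm h).symm

lemma eq_of_jk {I J : DyadicInterval} (hj : I.j = J.j) (hk : I.k = J.k) : I = J := by
  cases I; cases J; simp_all

lemma trichotomy {I J : DyadicInterval} (h : I ≠ J) :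
    Disjoint I.toSet J.toSet ∨ (J.toSet ⊆ I.left.toSet ∨ J.toSet ⊆ I.right.toSet) ∨
      (I.toSet ⊆ J.left.toSet ∨ I.toSet ⊆ J.right.toSet) := by
  rcases lt_trichotomy I.j J.j with hj | hj | hj
  · rcases subset_or_disjoint_of_lt hj with h1 | h1 | h1
    · exact Or.inl h1
    · exact Or.inr (Or.inl (Or.inl h1))
    · exact Or.inr (Or.inl (Or.inr h1))
  · exact Or.inl (disjoint_of_eq_scale hj fun hk => h (eq_of_jk hj hk))
  · rcases subset_or_disjoint_of_lt hj with h1 | h1 | h1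
    · exact Or.inl h1.symm
    · exact Or.inr (Or.inr (Or.inl h1))
    · exact Or.inr (Or.inr (Or.inr h1))

lemma integral_haar_mul_of_half {I J : DyadicInterval}
    (h : J.toSet ⊆ I.left.toSet ∨ J.toSet ⊆ I.right.toSet) :
    ∫ x, haar I x * haar J x = 0 := by
  obtain ⟨c, hc⟩ : ∃ c : ℝ, ∀ x, haar I x * haar J x = c * haar J x := by
    rcases h with h | h
    · refine ⟨-(Real.sqrt I.len)⁻¹, fun x => ?_⟩
      by_cases hx : x ∈ J.toSet
      · rw [haar_of_mem_left (h hx)]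
      · rw [haar_eq_zero_of_not_mem hx, mul_zero, mul_zero]
    · refine ⟨(Real.sqrt I.len)⁻¹, fun x => ?_⟩
      by_cases hx : x ∈ J.toSet
      · rw [haar_of_mem_right (h hx)]
      · rw [haar_eq_zero_of_not_mem hx, mul_zero, mul_zero]
  simp_rw [hc]
  rw [integral_const_mul, integral_haar, mul_zero]

lemma ip_haar_haar {I J : DyadicInterval} (h : I ≠ J) : ip (haar I) (haar J) = 0 := by
  unfold ip
  rcases trichotomy h with hdisj | hsub | hsub
  · have hz : ∀ x, haar I x * haar J x = 0 := by
      intro x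
      by_cases hx : x ∈ I.toSet
      · rw [haar_eq_zero_of_not_mem (Set.disjoint_left.mp hdisj hx), mul_zero]
      · rw [haar_eq_zero_of_not_mem hx, zero_mul]
    simp_rw [hz]
    exact integral_zero _ _
  · exact integral_haar_mul_of_half hsub
  · simp_rw [mul_comm (haar I _) (haar J _)]
    exact integral_haar_mul_of_half hsub

lemma ip_haar_self (I : DyadicInterval) : ip (haar I) (haar I) = 1 := by
  unfold ip
  have hz : ∀ x, haar I x * haar I x = I.len⁻¹ * I.toSet.indicator (fun _ => (1:ℝ)) x := by
    intro x
    rw [← pow_two]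
    exact sq_haar I x
  simp_rw [hz]
  rw [integral_const_mul, integral_indicator_one, inv_mul_cancel₀ I.len_pos.ne']

lemma integrableOn_toSet {f : ℝ → ℝ} (hf : LocallyIntegrable f) (I : DyadicInterval) :
    IntegrableOn f I.toSet := by
  rw [toSet_def]
  exact (hf.integrableOn_isCompact isCompact_Icc).mono_set Set.Ico_subset_Icc_self

lemma setIntegral_toSet_pos {f : ℝ → ℝ} (hpos : ∀ᵐ x ∂(volume : Measure ℝ), 0 < f x)
    (hf : LocallyIntegrable f) (I : DyadicInterval) : 0 < ∫ x in I.toSet, f x := by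
  have hint := integrableOn_toSet hf I
  have h0 : 0 ≤ᵐ[volume.restrict I.toSet] f :=
    ae_restrict_of_ae (hpos.mono fun x hx => hx.le)
  rw [setIntegral_pos_iff_support_of_nonneg_ae h0 hint]
  have hnull : volume (Function.support f)ᶜ = 0 := by
    refine measure_mono_null (fun x hx => ?_) (ae_iff.mp hpos)
    simp only [Function.mem_support, Set.mem_compl_iff, not_not] at hx
    simp [hx]
  have hsub : I.toSet ⊆ (Function.support f ∩ I.toSet) ∪ (Function.support f)ᶜ := by
    intro x hx
    by_cases hfx : x ∈ Function.support f
    · exact Or.inl ⟨hfx, hx⟩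
    · exact Or.inr hfx
  have h1 : volume I.toSet ≤ volume (Function.support f ∩ I.toSet) +
      volume (Function.support f)ᶜ := (measure_mono hsub).trans (measure_union_le _ _)
  rw [hnull, add_zero] at h1
  calc (0:ENNReal) < volume I.toSet := by
        rw [volume_toSet]; exact ENNReal.ofReal_pos.2 I.len_pos
  _ ≤ _ := h1

lemma avg_pos {f : ℝ → ℝ} (hpos : ∀ᵐ x ∂(volume : Measure ℝ), 0 < f x)
    (hf : LocallyIntegrable f) (I : DyadicInterval) : 0 < avg I f :=
  mul_pos (inv_pos.2 I.len_pos) (setIntegral_toSet_pos hpos hf I)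

end DyadicInterval

lemma tHaar_haar (w : ℝ → ℝ) (t : ℝ) (σ : DyadicInterval → ℝ) (I : DyadicInterval) (x : ℝ) :
    tHaar w t σ (haar I) x = σ I * (w x / avg I w) ^ t * haar I x := by
  unfold tHaar
  rw [tsum_eq_single I (fun J hJ => by rw [ip_haar_haar (Ne.symm hJ), mul_zero, zero_mul])]
  rw [ip_haar_self, mul_one]

/-- **Testing on Haar functions.** If `T^t_{w,σ}` is bounded from `L²(u)` to `L²(v)` with
norm `C`, then `⟨w^{2t} v⟩_I / (⟨u⟩_I ⟨w⟩_I^{2t}) ≤ C²` for every dyadic interval `I`. -/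
theorem testing_on_haar_functions (t : ℝ) (u v w : ℝ → ℝ) (σ : DyadicInterval → ℝ)
    (hu : IsWeight u) (hv : IsWeight v) (hw : IsWeight w)
    (hinv : LocallyIntegrable (u⁻¹)) (hσ : IsSigns σ)
    (C : ℝ) (hC : 0 ≤ C) (hbdd : BddBy u v (tHaar w t σ) C) :
    ∀ I : DyadicInterval,
      avg I (vw2t v w t) / (avg I u * (avg I w) ^ (2 * t)) ≤ C ^ 2 := by
  intro I
  have hA : 0 < avg I w := avg_pos hw.1 hw.2 I
  have hA2 : (0:ℝ) < (avg I w) ^ (2 * t) := Real.rpow_pos_of_pos hA _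
  have hU : 0 < ∫ x in I.toSet, u x := setIntegral_toSet_pos hu.1 hu.2 I
  have hL : 0 < I.len := I.len_pos
  set c : ℝ := I.len⁻¹ * ((avg I w) ^ (2 * t))⁻¹ with hc_def
  have hc : 0 < c := mul_pos (inv_pos.2 hL) (inv_pos.2 hA2)
  have key := hbdd (haar I) (measurable_haar I)
  -- compute the right-hand side integral
  have hRHS : (∫⁻ x, ENNReal.ofReal ((haar I x) ^ 2 * u x)) =
      ENNReal.ofReal (I.len⁻¹ * ∫ x in I.toSet, u x) := by
    have hptw : ∀ x, ENNReal.ofReal ((haar I x) ^ 2 * u x) =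
        I.toSet.indicator (fun y => ENNReal.ofReal (I.len⁻¹ * u y)) x := by
      intro x
      rw [sq_haar]
      by_cases hx : x ∈ I.toSet
      · rw [Set.indicator_of_mem hx, Set.indicator_of_mem hx]
        ring_nf
      · rw [Set.indicator_of_notMem hx, Set.indicator_of_notMem hx]
        simp
    simp_rw [hptw]
    rw [lintegral_indicator (measurableSet_toSet I)]
    rw [← ofReal_integral_eq_lintegral_ofReal
      ((integrableOn_toSet hu.2 I).const_mul _)
      (ae_restrict_of_ae (hu.1.mono fun x hx => by positivity))]
    rw [integral_const_mul]
  -- compute the left-hand side integral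
  have hLHS : (∫⁻ x, ENNReal.ofReal ((tHaar w t σ (haar I) x) ^ 2 * v x)) =
      ENNReal.ofReal c * ∫⁻ x in I.toSet, ENNReal.ofReal (vw2t v w t x) := by
    have hae : ∀ᵐ x ∂(volume : Measure ℝ), ENNReal.ofReal ((tHaar w t σ (haar I) x) ^ 2 * v x)
        = ENNReal.ofReal c * I.toSet.indicator (fun y => ENNReal.ofReal (vw2t v w t y)) x := by
      filter_upwards [hw.1] with x hwx
      rw [tHaar_haar]
      by_cases hx : x ∈ I.toSet
      · have hσ2 : (σ I) ^ 2 = 1 := by rcases hσ I with h | h <;> rw [h] <;> norm_num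
        have hr : ((w x / avg I w) ^ t) ^ 2 = (w x) ^ (2 * t) / (avg I w) ^ (2 * t) := by
          have hb : (0:ℝ) < w x / avg I w := div_pos hwx hA
          rw [← Real.rpow_natCast ((w x / avg I w) ^ t) 2,
            ← Real.rpow_mul hb.le, Real.div_rpow hwx.le hA.le]
          norm_num
          ring_nf
        have hexp : (σ I * (w x / avg I w) ^ t * haar I x) ^ 2 * v x
            = (σ I) ^ 2 * ((w x / avg I w) ^ t) ^ 2 * (haar I x) ^ 2 * v x := by ring
        rw [hexp, hσ2, hr, sq_haar, Set.indicator_of_mem hx, Set.indicator_of_mem hx]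
        rw [← ENNReal.ofReal_mul hc.le]
        congr 1
        rw [hc_def]
        unfold vw2t
        field_simp
      · rw [haar_eq_zero_of_not_mem hx, Set.indicator_of_notMem hx]
        simp
    rw [lintegral_congr_ae hae, lintegral_const_mul' _ _ ENNReal.ofReal_ne_top,
      lintegral_indicator (measurableSet_toSet I)]
  rw [hLHS, hRHS] at key
  set K := ∫⁻ x in I.toSet, ENNReal.ofReal (vw2t v w t x) with hK_def
  have hKbound : K ≤ ENNReal.ofReal (c⁻¹ * (C ^ 2 * (I.len⁻¹ * ∫ x in I.toSet, u x))) := by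
    have h1 : K = ENNReal.ofReal c⁻¹ * (ENNReal.ofReal c * K) := by
      rw [← mul_assoc, ← ENNReal.ofReal_mul (inv_nonneg.2 hc.le),
        inv_mul_cancel₀ hc.ne', ENNReal.ofReal_one, one_mul]
    rw [h1]
    calc ENNReal.ofReal c⁻¹ * (ENNReal.ofReal c * K)
        ≤ ENNReal.ofReal c⁻¹ * (ENNReal.ofReal (C ^ 2) *
            ENNReal.ofReal (I.len⁻¹ * ∫ x in I.toSet, u x)) := mul_le_mul_right key _
      _ = ENNReal.ofReal (c⁻¹ * (C ^ 2 * (I.len⁻¹ * ∫ x in I.toSet, u x))) := by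
          rw [← ENNReal.ofReal_mul (sq_nonneg C), ← ENNReal.ofReal_mul (inv_nonneg.2 hc.le)]
  have hKlt : K < ⊤ := lt_of_le_of_lt hKbound ENNReal.ofReal_lt_top
  have hnn : 0 ≤ᵐ[volume.restrict I.toSet] vw2t v w t := by
    refine ae_restrict_of_ae ?_
    filter_upwards [hv.1, hw.1] with x hvx hwx
    unfold vw2t
    positivity
  have haemeas : AEMeasurable (vw2t v w t) (volume.restrict I.toSet) := by
    have hv' : AEMeasurable v (volume.restrict I.toSet) :=
      hv.2.aestronglyMeasurable.aemeasurable.restrict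
    have hw' : AEMeasurable w (volume.restrict I.toSet) :=
      hw.2.aestronglyMeasurable.aemeasurable.restrict
    exact hv'.mul (hw'.pow aemeasurable_const)
  have hint : IntegrableOn (vw2t v w t) I.toSet := by
    refine ⟨haemeas.aestronglyMeasurable, ?_⟩
    rw [hasFiniteIntegral_iff_ofReal hnn]
    exact hKlt
  have hKe : ENNReal.ofReal (∫ x in I.toSet, vw2t v w t x) = K :=
    ofReal_integral_eq_lintegral_ofReal hint hnn
  have hreal : ∫ x in I.toSet, vw2t v w t x
      ≤ c⁻¹ * (C ^ 2 * (I.len⁻¹ * ∫ x in I.toSet, u x)) := by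
    have h2 : ENNReal.ofReal (∫ x in I.toSet, vw2t v w t x)
        ≤ ENNReal.ofReal (c⁻¹ * (C ^ 2 * (I.len⁻¹ * ∫ x in I.toSet, u x))) := by
      rw [hKe]; exact hKbound
    exact (ENNReal.ofReal_le_ofReal_iff
      (mul_nonneg (inv_nonneg.2 hc.le) (mul_nonneg (sq_nonneg C)
        (mul_nonneg (inv_nonneg.2 hL.le) hU.le)))).1 h2
  have hcinv : c⁻¹ = I.len * (avg I w) ^ (2 * t) := by
    rw [hc_def, mul_inv, inv_inv, inv_inv]
  rw [hcinv] at hreal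
  have hgoal : avg I (vw2t v w t) ≤ C ^ 2 * (avg I u * (avg I w) ^ (2 * t)) := by
    unfold avg
    have h3 := mul_le_mul_of_nonneg_left hreal (inv_nonneg.2 hL.le)
    calc I.len⁻¹ * ∫ x in I.toSet, vw2t v w t x
        ≤ I.len⁻¹ * (I.len * (avg I w) ^ (2 * t) *
            (C ^ 2 * (I.len⁻¹ * ∫ x in I.toSet, u x))) := h3
      _ = C ^ 2 * (I.len⁻¹ * (∫ x in I.toSet, u x) * (avg I w) ^ (2 * t)) := by
          field_simp
  have hAu : 0 < avg I u := avg_pos hu.1 hu.2 I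
  rw [div_le_iff₀ (mul_pos hAu hA2)]
  exact hgoal
end
end
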